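/- For the complete graph K_n with n even, say n = 2k, the Mycielski graph M_2(K_{2k}) satisfies box(M_2(K_{2k})) > k; that is, the complement of M_2(K_{2k}) cannot be covered by k cointerval spanning subgraphs. -/

import Mathlib

open SimpleGraph

/-- `G` has a representation by axis-parallel boxes in `ℝ^k`: distinct vertices are
adjacent iff their boxes intersect. -/
def HasBoxRep {V : Type*} (G : SimpleGraph V) (k : ℕ) : Prop :=
  ∃ lo hi : V → Fin k → ℝ,
    ∀ u v : V, u ≠ v →
      (G.Adj u v ↔ ∀ i, max (lo u i) (lo v i) ≤ min (hi u i) (hi v i))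

/-- The boxicity of a graph: the least `k` such that `G` has a box representation
in `ℝ^k` (0 for complete graphs). -/
noncomputable def boxicity {V : Type*} (G : SimpleGraph V) : ℕ :=
  sInf {k | HasBoxRep G k}

/-- An interval graph: an intersection graph of closed intervals on the real line. -/
def IsIntervalGraph {V : Type*} (G : SimpleGraph V) : Prop := HasBoxRep G 1

/-- A cointerval graph: the complement is an interval graph. -/
def Cointerval {V : Type*} (G : SimpleGraph V) : Prop := IsIntervalGraph Gᶜ

/-- The generalized Mycielski graph `M_r(G)`: vertex `none` is the apex `z`,
`some (v, i)` is the copy `v_{i+1}` of `v` in level `i`.  Level `0` induces a copy of `G`,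
consecutive levels are joined by `u_{i-1}v_i, v_{i-1}u_i` for `uv ∈ E(G)`, and `z`
is joined to all vertices of the top level `r-1`. -/
def genMycielski {V : Type*} (G : SimpleGraph V) (r : ℕ) :
    SimpleGraph (Option (V × Fin r)) :=
  SimpleGraph.fromRel (fun a b =>
    match a, b with
    | some (u, i), some (v, j) =>
        (i = j ∧ (i : ℕ) = 0 ∧ G.Adj u v) ∨ ((j : ℕ) = (i : ℕ) + 1 ∧ G.Adj u v)
    | some (_, i), none => (i : ℕ) = r - 1
    | none, _ => False)

/-- A focal (universal) vertex: adjacent to all other vertices. -/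
def IsFocal {V : Type*} (G : SimpleGraph V) (v : V) : Prop :=
  ∀ w, w ≠ v → G.Adj v w

/-- `G` with `n` additional universal vertices, i.e. the `n`-th focalization `G^{fⁿ}`. -/
def addUniversal {V : Type*} (G : SimpleGraph V) (n : ℕ) :
    SimpleGraph (V ⊕ Fin n) :=
  SimpleGraph.fromRel (fun a b =>
    match a, b with
    | Sum.inl u, Sum.inl v => G.Adj u v
    | _, _ => True)

/-- The edge clique cover number: the minimum number of cliques covering all edges. -/
noncomputable def edgeCliqueCoverNumber {V : Type*} (G : SimpleGraph V) : ℕ :=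
  sInf {k | ∃ f : Fin k → Set V, (∀ i, G.IsClique (f i)) ∧
    ∀ u v, G.Adj u v → ∃ i, u ∈ f i ∧ v ∈ f i}

/-- Disjoint union of two graphs. -/
def disjUnionGraph {α β : Type*} (G : SimpleGraph α) (H : SimpleGraph β) :
    SimpleGraph (α ⊕ β) :=
  SimpleGraph.fromRel (fun a b =>
    match a, b with
    | Sum.inl u, Sum.inl v => G.Adj u v
    | Sum.inr u, Sum.inr v => H.Adj u v
    | _, _ => False)

/-- The complete multipartite graph with parts `V i`. -/
def completeMultipartite {ι : Type*} (V : ι → Type*) : SimpleGraph (Σ i, V i) where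
  Adj a b := a.1 ≠ b.1
  symm := ⟨fun _ _ h => Ne.symm h⟩
  loopless := ⟨fun _ h => h rfl⟩

/-!
Write `v₁ = (v, 0)`, `v₂ = (v, 1)` and `z` for the apex, and suppose `M₂(K_{2k})` has a box
representation in `ℝᵏ`. Since `v₁v₂` is not an edge, each pair `v₁, v₂` is separated in some
coordinate, with `v₂` either to the right or to the left of `v₁`. Two pairs `u, v` cannot be
separated in the same coordinate in the same direction, because `u₁v₂` and `v₁u₂` are edges; so
the `2k` pairs use each of the `2k` coordinate directions exactly once. Now `z` is not adjacent to
`v₁` and is separated from it in some coordinate, say `z` lies left of `v₁`. The pair `u` with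
`u₂` right of `u₁` in that coordinate gives `lo v₁ ≤ hi u₁ < lo u₂ ≤ hi z < lo v₁`, since level
`0` is a clique and `z` is adjacent to `u₂`.
-/

def IsBoxRep {V : Type*} (G : SimpleGraph V) {k : ℕ} (lo hi : V → Fin k → ℝ) : Prop :=
  ∀ u v : V, u ≠ v → (G.Adj u v ↔ ∀ i, max (lo u i) (lo v i) ≤ min (hi u i) (hi v i))

theorem hasBoxRep_iff {V : Type*} {G : SimpleGraph V} {k : ℕ} :
    HasBoxRep G k ↔ ∃ lo hi : V → Fin k → ℝ, IsBoxRep G lo hi :=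
  Iff.rfl

namespace IsBoxRep

variable {V : Type*} {G : SimpleGraph V} {k : ℕ} {lo hi : V → Fin k → ℝ}

theorem lo_le_hi_of_adj (h : IsBoxRep G lo hi) {u v : V} (huv : G.Adj u v) (i : Fin k) :
    lo u i ≤ hi v i :=
  (le_min_iff.1 ((h u v huv.ne).1 huv i)).2.trans' (le_max_left _ _)

theorem lo_le_hi_self_of_adj (h : IsBoxRep G lo hi) {u v : V} (huv : G.Adj u v) (i : Fin k) :
    lo u i ≤ hi u i :=
  (le_min_iff.1 ((h u v huv.ne).1 huv i)).1.trans' (le_max_left _ _)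

theorem exists_lt_of_not_adj (h : IsBoxRep G lo hi) {u v : V} (huv : u ≠ v)
    (hnadj : ¬ G.Adj u v) (hu : ∀ i, lo u i ≤ hi u i) (hv : ∀ i, lo v i ≤ hi v i) :
    ∃ i, hi u i < lo v i ∨ hi v i < lo u i := by
  by_contra! hmeet
  exact hnadj ((h u v huv).2 fun i =>
    max_le (le_min (hu i) (hmeet i).2) (le_min (hmeet i).1 (hv i)))

theorem not_lt_of_lt_of_adj (h : IsBoxRep G lo hi) {x y x' y' : V} (hxy' : G.Adj x y')
    (hx'y : G.Adj x' y) {c : Fin k} (hxy : hi x c < lo y c) : ¬ hi x' c < lo y' c := by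
  have := h.lo_le_hi_of_adj hxy'.symm c
  have := h.lo_le_hi_of_adj hx'y.symm c
  intro
  linarith

end IsBoxRep

theorem HasBoxRep.mono {V : Type*} {G : SimpleGraph V} {m k : ℕ} (h : HasBoxRep G m)
    (hmk : m ≤ k) : HasBoxRep G k := by
  obtain ⟨lo, hi, h⟩ := h
  refine ⟨fun v i => if hm : (i : ℕ) < m then lo v ⟨i, hm⟩ else 0,
    fun v i => if hm : (i : ℕ) < m then hi v ⟨i, hm⟩ else 0, fun u v huv => ?_⟩
  rw [h u v huv]
  constructor
  · intro h i
    by_cases hm : (i : ℕ) < m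
    · simpa [hm] using h _
    · simp [hm]
  · intro h i
    simpa [i.2] using h (Fin.castLE hmk i)

/-- In coordinate `w`, the box of `w` is the point `0`, its neighbours get `[0, 1]` and all other
vertices get the point `1`. -/
theorem hasBoxRep_nat_card {V : Type*} [Finite V] (G : SimpleGraph V) :
    HasBoxRep G (Nat.card V) := by
  classical
  let e := (Finite.equivFin V).symm
  refine ⟨fun v i => if v = e i ∨ G.Adj (e i) v then 0 else 1,
    fun v i => if v = e i then 0 else 1, fun u v huv => ⟨fun hadj i => ?_, fun h => ?_⟩⟩
  · by_cases hu : u = e i <;> by_cases hv : v = e i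
    · exact absurd (hu.trans hv.symm) huv
    · subst hu; simp [hadj, hv]
    · subst hv; simp [hadj.symm, hu]
    · simp only [hu, hv, false_or, if_false]; split_ifs <;> norm_num
  · by_contra hnadj
    have := h (e.symm u)
    norm_num [Ne.symm huv, hnadj] at this

theorem lt_boxicity_iff {V : Type*} [Finite V] {G : SimpleGraph V} {k : ℕ} :
    k < boxicity G ↔ ¬ HasBoxRep G k := by
  refine ⟨fun hk h => hk.not_ge (Nat.sInf_le h), fun h => ?_⟩
  by_contra! hle
  exact h ((Nat.sInf_mem (s := {k | HasBoxRep G k}) ⟨_, hasBoxRep_nat_card G⟩).mono hle)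

theorem hasBoxRep_of_cointerval_cover {V : Type*} {G : SimpleGraph V} {k : ℕ}
    {f : Fin k → SimpleGraph V} (hle : ∀ i, f i ≤ Gᶜ) (hco : ∀ i, Cointerval (f i))
    (hcov : ∀ u v, Gᶜ.Adj u v → ∃ i, (f i).Adj u v) : HasBoxRep G k := by
  choose lo hi hrep using hco
  refine ⟨fun v i => lo i v 0, fun v i => hi i v 0, fun u v huv => ?_⟩
  have hG : G.Adj u v ↔ ∀ i, (f i)ᶜ.Adj u v := by
    simp only [compl_adj, ne_eq, huv, not_false_eq_true, true_and]
    refine ⟨fun hadj i hf => (hle i hf).2 hadj, fun h => ?_⟩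
    by_contra hnadj
    obtain ⟨i, hi⟩ := hcov u v ⟨huv, hnadj⟩
    exact h i hi
  simp only [hG, hrep _ u v huv, Fin.forall_fin_one]

section Mycielski

variable {V : Type*} {G : SimpleGraph V} {r : ℕ} {u v : V} {i : Fin r}

@[simp]
theorem genMycielski_adj_none_some :
    (genMycielski G r).Adj none (some (v, i)) ↔ (i : ℕ) = r - 1 := by
  simp [genMycielski]

@[simp]
theorem genMycielski_two_adj_zero_zero :
    (genMycielski G 2).Adj (some (u, 0)) (some (v, 0)) ↔ G.Adj u v := by
  simpa [genMycielski, G.adj_comm v u] using fun h : G.Adj u v => h.ne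

@[simp]
theorem genMycielski_two_adj_zero_one :
    (genMycielski G 2).Adj (some (u, 0)) (some (v, 1)) ↔ G.Adj u v := by
  simp [genMycielski]

end Mycielski

section CompleteGraph

variable {W : Type*} {k : ℕ} {lo hi : Option (W × Fin 2) → Fin k → ℝ}

namespace IsBoxRep

theorem mycielski_lo_zero_le_hi_zero [Nontrivial W]
    (h : IsBoxRep (genMycielski (completeGraph W) 2) lo hi) (u v : W) (c : Fin k) :
    lo (some (u, 0)) c ≤ hi (some (v, 0)) c := by
  rcases eq_or_ne u v with rfl | huv
  · obtain ⟨w, hw⟩ := exists_ne u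
    exact h.lo_le_hi_self_of_adj (v := some (w, 1)) (by simpa using hw.symm) c
  · exact h.lo_le_hi_of_adj (by simpa using huv) c

theorem mycielski_exists_separating [Nontrivial W]
    (h : IsBoxRep (genMycielski (completeGraph W) 2) lo hi) (v : W) :
    ∃ c, hi (some (v, 0)) c < lo (some (v, 1)) c ∨ hi (some (v, 1)) c < lo (some (v, 0)) c :=
  h.exists_lt_of_not_adj (by simp) (by simp) (h.mycielski_lo_zero_le_hi_zero v v)
    (h.lo_le_hi_self_of_adj (v := none) (by simp [adj_comm]))

theorem mycielski_exists_lt_and_exists_gt [Finite W] [Nontrivial W]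
    (h : IsBoxRep (genMycielski (completeGraph W) 2) lo hi) (hW : 2 * k ≤ Nat.card W)
    (c : Fin k) :
    (∃ r, hi (some (r, 0)) c < lo (some (r, 1)) c) ∧
      ∃ l, hi (some (l, 1)) c < lo (some (l, 0)) c := by
  choose c₀ hc₀ using h.mycielski_exists_separating
  let g : W → Fin k × Bool := fun v =>
    (c₀ v, decide (hi (some (v, 0)) (c₀ v) < lo (some (v, 1)) (c₀ v)))
  have hg : Function.Injective g := by
    intro u v huv
    simp only [g, Prod.mk.injEq, decide_eq_decide] at huv
    obtain ⟨hc, hdir⟩ := huv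
    by_contra hne
    by_cases hu : hi (some (u, 0)) (c₀ u) < lo (some (u, 1)) (c₀ u)
    · refine h.not_lt_of_lt_of_adj ?_ ?_ hu (hc ▸ hdir.1 hu) <;> simpa [eq_comm] using hne
    · refine h.not_lt_of_lt_of_adj ?_ ?_ ((hc₀ u).resolve_left hu)
        (hc ▸ (hc₀ v).resolve_left (hdir.not.1 hu)) <;> refine Adj.symm ?_ <;>
        simpa [eq_comm] using hne
  have hgs := (hg.bijective_of_nat_card_le (by simpa [mul_comm] using hW)).2
  obtain ⟨r, hr⟩ := hgs (c, true)
  obtain ⟨l, hl⟩ := hgs (c, false)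
  simp only [g, Prod.mk.injEq, decide_eq_true_eq, decide_eq_false_iff_not] at hr hl
  exact ⟨⟨r, hr.1 ▸ hr.2⟩, ⟨l, hl.1 ▸ (hc₀ l).resolve_left hl.2⟩⟩

end IsBoxRep

theorem not_hasBoxRep_genMycielski_completeGraph_two [Finite W] [Nontrivial W]
    (hW : 2 * k ≤ Nat.card W) : ¬ HasBoxRep (genMycielski (completeGraph W) 2) k := by
  rw [hasBoxRep_iff]
  rintro ⟨lo, hi, h⟩
  obtain ⟨v⟩ : Nonempty W := inferInstance
  obtain ⟨c, hc⟩ := h.exists_lt_of_not_adj (u := none) (v := some (v, 0)) (by simp) (by simp)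
    (h.lo_le_hi_self_of_adj (v := some (v, 1)) (by simp)) (h.mycielski_lo_zero_le_hi_zero v v)
  obtain ⟨⟨r, hr⟩, ⟨l, hl⟩⟩ := h.mycielski_exists_lt_and_exists_gt hW c
  rcases hc with hz | hz
  · have := h.lo_le_hi_of_adj (u := some (r, 1)) (v := none) (by simp [adj_comm]) c
    have := h.mycielski_lo_zero_le_hi_zero v r c
    linarith
  · have := h.lo_le_hi_of_adj (u := none) (v := some (l, 1)) (by simp) c
    have := h.mycielski_lo_zero_le_hi_zero l v c
    linarith

end CompleteGraph

/-- `box(M₂(K_{2k})) > k`; equivalently, the complement of `M₂(K_{2k})`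
cannot be covered by `k` cointerval spanning subgraphs. -/
theorem boxicity_mycielski_complete_even (k : ℕ) (hk : 1 ≤ k) :
    k < boxicity (genMycielski (completeGraph (Fin (2 * k))) 2) ∧
    ¬ ∃ f : Fin k → SimpleGraph (Option (Fin (2 * k) × Fin 2)),
        (∀ i, f i ≤ (genMycielski (completeGraph (Fin (2 * k))) 2)ᶜ) ∧
        (∀ i, Cointerval (f i)) ∧
        (∀ u v, (genMycielski (completeGraph (Fin (2 * k))) 2)ᶜ.Adj u v →
          ∃ i, (f i).Adj u v) := by
  have : Nontrivial (Fin (2 * k)) := Fin.nontrivial_iff_two_le.2 (by omega)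
  have hbox := not_hasBoxRep_genMycielski_completeGraph_two (W := Fin (2 * k)) (k := k) (by simp)
  exact ⟨lt_boxicity_iff.2 hbox, fun ⟨_, hle, hco, hcov⟩ =>
    hbox (hasBoxRep_of_cointerval_cover hle hco hcov)⟩
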